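/- arXiv:2101.10648 — 2 statements merged into one kernel-verified Lean document; each statement's English description precedes it below -/
import Mathlib

section
/- Let H be the graph constructed from G and k as above, and let A* ⊆ E be a set of at most k(k-1)/2 edges of G added to H. Then the resulting graph (V', E' ∪ A*) contains at least k nodes whose degree strictly exceeds the degree of v_e if and only if G contains a clique on k vertices whose edge set is contained in A*. -/
/-!
In `H ∪ A*` the evader has degree `|V| + k - 2`, an original node `v` has degree
`|V| + deg_A v` (its `|N_G(v)|` pendants make up exactly for the `G`-neighbours it loses to the
complement), and pendants have degree `1`. So the nodes beating the evader are the `v` with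
`deg_A v ≥ k - 1`. If there are `k` of them, `k(k-1) ≤ ∑ deg_A = 2|A*| ≤ k(k-1)` forces equality
throughout: exactly `k` such nodes, every other node isolated in `A*`, so each of the `k` nodes
is `A*`-adjacent to all the others. Conversely a `k`-clique of `A*` has `k` nodes of
`A*`-degree `≥ k - 1`.
-/

/-- Vertex type of the degree-reduction graph `H`: evader `v_e`, original nodes of `V`,
pendant nodes `x_{i,j}` (one for each unit of degree of each original node), and
pendant nodes `z_1, ..., z_{k-2}`. -/
abbrev HVert {V : Type*} [Fintype V] (G : SimpleGraph V) [DecidableRel G.Adj] (k : ℕ) :=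
  Unit ⊕ V ⊕ (Σ v : V, Fin (G.degree v)) ⊕ Fin (k - 2)

/-- The degree-reduction graph `H`: `v_e` is adjacent to every original node and to the
`k-2` pendants `z_i`; each original node `v` is adjacent to its `|N_G(v)|` pendants
`x_{v,j}`; and the edges among original nodes are the complement of the edges of `G`. -/
def Hgraph {V : Type*} [Fintype V] (G : SimpleGraph V) [DecidableRel G.Adj] (k : ℕ) :
    SimpleGraph (HVert G k) :=
  SimpleGraph.fromRel (fun a b =>
    match a, b with
    | Sum.inl _, Sum.inr (Sum.inl _) => True
    | Sum.inr (Sum.inl v), Sum.inr (Sum.inr (Sum.inl ⟨w, _⟩)) => v = w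
    | Sum.inl _, Sum.inr (Sum.inr (Sum.inr _)) => True
    | Sum.inr (Sum.inl v), Sum.inr (Sum.inl w) => ¬ G.Adj v w
    | _, _ => False)


/-- The embedding of the original vertex set `V` into the vertices of `H`. -/
def origEmb {V : Type*} [Fintype V] (G : SimpleGraph V) [DecidableRel G.Adj] (k : ℕ) :
    V ↪ HVert G k :=
  ⟨fun v => Sum.inr (Sum.inl v), fun a b h => by simpa using h⟩

open scoped Finset

namespace SimpleGraph

theorem degree_sup_of_disjoint {V : Type*} {G₁ G₂ : SimpleGraph V} (v : V)
    [Fintype ((G₁ ⊔ G₂).neighborSet v)] [Fintype (G₁.neighborSet v)] [Fintype (G₂.neighborSet v)]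
    (h : Disjoint G₁ G₂) : (G₁ ⊔ G₂).degree v = G₁.degree v + G₂.degree v := by
  simp only [← card_neighborFinset_eq_degree, neighborFinset_sup_of_disjoint _ h,
    Finset.card_disjUnion]

variable {V : Type*} [Fintype V] {G : SimpleGraph V} [DecidableRel G.Adj]

theorem IsNClique.pred_le_degree {n : ℕ} {s : Finset V} (hs : G.IsNClique n s)
    {v : V} (hv : v ∈ s) : n - 1 ≤ G.degree v := by
  classical
  have hsub : s.erase v ⊆ G.neighborFinset v := fun w hw =>
    (G.mem_neighborFinset v w).2 <|
      hs.isClique hv (Finset.mem_of_mem_erase hw) (Finset.ne_of_mem_erase hw).symm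
  rw [← hs.card_eq, ← Finset.card_erase_of_mem hv]
  exact Finset.card_le_card hsub

theorem isClique_of_degree_eq_zero_of_card_pred_le_degree {s : Finset V}
    (hout : ∀ v ∉ s, G.degree v = 0) (hin : ∀ v ∈ s, #s - 1 ≤ G.degree v) :
    G.IsClique (s : Set V) := by
  classical
  intro v hv w hw hvw
  have hsub : G.neighborFinset v ⊆ s.erase v := fun u hu => by
    rw [mem_neighborFinset] at hu
    refine Finset.mem_erase.2 ⟨hu.ne.symm, ?_⟩
    by_contra hus
    exact hu.symm.degree_pos_left.ne' (hout u hus)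
  have hcard : #(s.erase v) ≤ #(G.neighborFinset v) := by
    rw [Finset.card_erase_of_mem hv, card_neighborFinset_eq_degree]
    exact hin v hv
  have hnbr := Finset.eq_of_subset_of_card_le hsub hcard
  rw [← mem_neighborFinset, hnbr]
  exact Finset.mem_erase.2 ⟨Ne.symm hvw, hw⟩

theorem exists_isNClique_of_le_card_filter_pred_le_degree {k : ℕ} (hk : 2 ≤ k)
    (hE : 2 * #G.edgeFinset ≤ k * (k - 1)) (hS : k ≤ #{v | k - 1 ≤ G.degree v}) :
    ∃ s, G.IsNClique k s := by
  set S : Finset V := {v | k - 1 ≤ G.degree v}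
  have hdeg : ∀ v ∈ S, k - 1 ≤ G.degree v := fun v hv => (Finset.mem_filter.1 hv).2
  rw [← sum_degrees_eq_twice_card_edges] at hE
  have hmul : k * (k - 1) ≤ #S * (k - 1) := Nat.mul_le_mul_right _ hS
  have hsum : #S * (k - 1) ≤ ∑ v ∈ S, G.degree v := by
    simpa using Finset.card_nsmul_le_sum S _ _ hdeg
  have hsub : ∑ v ∈ S, G.degree v ≤ ∑ v, G.degree v :=
    Finset.sum_le_sum_of_subset (Finset.subset_univ S)
  have hcard : #S = k :=
    le_antisymm (Nat.le_of_mul_le_mul_right (by omega) (by omega : 0 < k - 1)) hS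
  have hout : ∀ v ∉ S, G.degree v = 0 := by
    intro v hv
    by_contra hpos
    have := Finset.sum_lt_sum_of_subset (f := fun v => G.degree v) (Finset.subset_univ S)
      (Finset.mem_univ v) hv (Nat.pos_of_ne_zero hpos) (fun _ _ _ => Nat.zero_le _)
    omega
  exact ⟨S, isClique_of_degree_eq_zero_of_card_pred_le_degree hout (hcard ▸ hdeg), hcard⟩

theorem le_card_filter_pred_le_degree_iff_exists_isNClique {k : ℕ} (hk : 2 ≤ k)
    (hE : 2 * #G.edgeFinset ≤ k * (k - 1)) :
    k ≤ #{v | k - 1 ≤ G.degree v} ↔ ∃ s, G.IsNClique k s := by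
  refine ⟨exists_isNClique_of_le_card_filter_pred_le_degree hk hE, fun ⟨s, hs⟩ => ?_⟩
  calc k = #s := hs.card_eq.symm
    _ ≤ _ := Finset.card_le_card fun _ hv =>
      Finset.mem_filter.2 ⟨Finset.mem_univ _, hs.pred_le_degree hv⟩

end SimpleGraph

section Construction

open SimpleGraph

variable {V : Type*} [Fintype V] (G : SimpleGraph V) [DecidableRel G.Adj] (k : ℕ)
  (A : SimpleGraph V)

local notation "H⁺" => Hgraph G k ⊔ A.map (origEmb G k)

@[simp] theorem origEmb_apply (v : V) : origEmb G k v = Sum.inr (Sum.inl v) := rfl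

theorem neighborSet_evader :
    (H⁺).neighborSet (Sum.inl ()) =
      Set.range (origEmb G k) ∪
      Set.range (fun i : Fin (k - 2) => (Sum.inr (Sum.inr (Sum.inr i)) : HVert G k)) := by
  ext (_ | _ | _ | _) <;> simp [Hgraph]

theorem neighborSet_orig (v : V) :
    (H⁺).neighborSet (Sum.inr (Sum.inl v)) =
      insert (Sum.inl ()) (origEmb G k '' (Gᶜ ⊔ A).neighborSet v ∪
      Set.range (fun j : Fin (G.degree v) => (Sum.inr (Sum.inr (Sum.inl ⟨v, j⟩)) : HVert G k))) := by
  ext (_ | w | ⟨w, j⟩ | _) <;> simp [Hgraph, adj_comm]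
  rintro rfl
  exact ⟨j, .rfl⟩

theorem neighborSet_pendant_orig (w : V) (j : Fin (G.degree w)) :
    (H⁺).neighborSet (Sum.inr (Sum.inr (Sum.inl ⟨w, j⟩))) = {Sum.inr (Sum.inl w)} := by
  ext (_ | _ | _ | _) <;> simp [Hgraph, eq_comm]

theorem neighborSet_pendant_evader (i : Fin (k - 2)) :
    (H⁺).neighborSet (Sum.inr (Sum.inr (Sum.inr i))) = {Sum.inl ()} := by
  ext (_ | _ | _ | _) <;> simp [Hgraph]

theorem ncard_neighborSet_evader :
    ((H⁺).neighborSet (Sum.inl ())).ncard = Fintype.card V + (k - 2) := by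
  rw [neighborSet_evader,
    Set.ncard_union_eq (Set.disjoint_left.2 <| by rintro _ ⟨v, rfl⟩ ⟨i, h⟩; simp at h),
    Set.ncard_range_of_injective (origEmb G k).injective,
    Set.ncard_range_of_injective (fun a b h => by simpa using h), Nat.card_eq_fintype_card,
    Nat.card_fin]

theorem ncard_neighborSet_orig [DecidableRel A.Adj] (hAG : A ≤ G) (v : V) :
    ((H⁺).neighborSet (Sum.inr (Sum.inl v))).ncard = Fintype.card V + A.degree v := by
  classical
  have hdeg : ((Gᶜ ⊔ A).neighborSet v).ncard = Gᶜ.degree v + A.degree v := by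
    rw [← coe_neighborFinset, Set.ncard_coe_finset, card_neighborFinset_eq_degree,
      degree_sup_of_disjoint v (disjoint_compl_left.mono_right hAG)]
  rw [neighborSet_orig, Set.ncard_insert_of_notMem (by simp),
    Set.ncard_union_eq (Set.disjoint_left.2 <| by rintro _ ⟨w, _, rfl⟩ ⟨j, h⟩; simp at h),
    Set.ncard_image_of_injective _ (origEmb G k).injective, hdeg,
    Set.ncard_range_of_injective (fun a b h => by simpa using h), Nat.card_fin, degree_compl]
  have := G.degree_lt_card_verts v
  omega

theorem setOf_ncard_neighborSet_evader_lt_eq_image [DecidableRel A.Adj] (hk : 2 ≤ k)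
    (hAG : A ≤ G) :
    {x : HVert G k | ((H⁺).neighborSet (Sum.inl ())).ncard < ((H⁺).neighborSet x).ncard} =
      origEmb G k '' {v | k - 1 ≤ A.degree v} := by
  ext (_ | v | ⟨w, j⟩ | i)
  · simp
  · simp only [Set.mem_ofPred_eq, ncard_neighborSet_evader, ncard_neighborSet_orig G k A hAG,
      Set.mem_image, origEmb_apply, Sum.inr.injEq, Sum.inl.injEq, exists_eq_right]
    omega
  · have : 0 < Fintype.card V := Fintype.card_pos_iff.2 ⟨w⟩
    simp only [Set.mem_ofPred_eq, ncard_neighborSet_evader, neighborSet_pendant_orig,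
      Set.ncard_singleton, Set.mem_image, origEmb_apply, Sum.inr.injEq, reduceCtorEq, and_false,
      exists_false, iff_false, not_lt]
    omega
  · have : 0 < k - 2 := i.pos
    simp only [Set.mem_ofPred_eq, ncard_neighborSet_evader, neighborSet_pendant_evader,
      Set.ncard_singleton, Set.mem_image, origEmb_apply, Sum.inr.injEq, reduceCtorEq, and_false,
      exists_false, iff_false, not_lt]
    omega

end Construction

theorem clique_iff_k_nodes_exceed_general {V : Type*} [Fintype V]
    (G : SimpleGraph V) [DecidableRel G.Adj] (k : ℕ) (hk : 2 ≤ k)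
    (A : SimpleGraph V) (hAG : A ≤ G) (hA : A.edgeSet.ncard ≤ k * (k - 1) / 2) :
    (k ≤ {x : HVert G k |
        (((Hgraph G k) ⊔ A.map (origEmb G k)).neighborSet (Sum.inl ())).ncard <
        (((Hgraph G k) ⊔ A.map (origEmb G k)).neighborSet x).ncard}.ncard) ↔
      ∃ s : Finset V, s.card = k ∧ G.IsClique ↑s ∧
        ∀ v ∈ s, ∀ w ∈ s, v ≠ w → A.Adj v w := by
  classical
  have hE : 2 * #A.edgeFinset ≤ k * (k - 1) := by
    rw [← SimpleGraph.coe_edgeFinset, Set.ncard_coe_finset] at hA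
    have := Nat.mul_div_le (k * (k - 1)) 2
    omega
  rw [setOf_ncard_neighborSet_evader_lt_eq_image G k A hk hAG,
    Set.ncard_image_of_injective _ (origEmb G k).injective, Set.ncard_eq_toFinset_card',
    Set.toFinset_ofPred, SimpleGraph.le_card_filter_pred_le_degree_iff_exists_isNClique hk hE]
  constructor
  · rintro ⟨s, hs⟩
    exact ⟨s, hs.card_eq, hs.isClique.mono hAG, fun v hv w hw => hs.isClique hv hw⟩
  · rintro ⟨s, hcard, -, hs⟩
    exact ⟨s, fun v hv w hw => hs v hv w hw, hcard⟩

/-- Let `A* ⊆ E` be a set of at most `k(k-1)/2` edges of `G` (a graph `A ≤ G`) added to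
`H`.  Then the resulting graph `H ∪ A*` contains at least `k` nodes whose degree strictly
exceeds the degree of `v_e` if and only if `G` contains a clique on `k` vertices whose
edge set is contained in `A*`. -/
theorem clique_iff_k_nodes_exceed {V : Type*} [Fintype V] [DecidableEq V]
    (G : SimpleGraph V) [DecidableRel G.Adj] (k : ℕ) (hk : 2 ≤ k)
    (A : SimpleGraph V) (hAG : A ≤ G) (hA : A.edgeSet.ncard ≤ k * (k - 1) / 2) :
    (k ≤ {x : HVert G k |
        (((Hgraph G k) ⊔ A.map (origEmb G k)).neighborSet (Sum.inl ())).ncard <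
        (((Hgraph G k) ⊔ A.map (origEmb G k)).neighborSet x).ncard}.ncard) ↔
      ∃ s : Finset V, s.card = k ∧ G.IsClique ↑s ∧
        ∀ v ∈ s, ∀ w ∈ s, v ≠ w → A.Adj v w :=
  clique_iff_k_nodes_exceed_general G k hk A hAG hA
end

section
/- If adding a set A* of at most k(k-1)/2 edges to a graph increases the degree of at least k distinct vertices by at least k-1 each, then |A*| = k(k-1)/2 and those k vertices together with the edges of A* form a complete graph on k vertices. -/
/-!
Split the degree of each vertex of `G ⊔ A` into its `G`-part and its `A`-part: every vertex of `s`
has `A`-degree at least `k - 1`, so the `A`-degrees add up to at least `k(k-1) ≥ 2|A|`, while by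
the handshake lemma all `A`-degrees add up to exactly `2|A|`. Hence all of these inequalities
are equalities: `|A| = k(k-1)/2`, and no edge of `A` leaves `s`. A vertex of `s` then has at
least `k - 1` neighbours among the other `k - 1` vertices of `s`, i.e. it is adjacent to all
of them.
-/

open Finset

theorem Finset.eq_zero_of_notMem_of_sum_le_card_mul {ι : Type*} [Fintype ι] {s : Finset ι}
    {f : ι → ℕ} {c : ℕ} (hle : ∀ i ∈ s, c ≤ f i) (hsum : ∑ i, f i ≤ #s * c) {i : ι}
    (hi : i ∉ s) : f i = 0 := by
  classical
  have hs : #s * c ≤ ∑ j ∈ s, f j := by simpa using card_nsmul_le_sum s f c hle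
  have hins : ∑ j ∈ insert i s, f j ≤ ∑ j, f j := sum_le_sum_of_subset (subset_univ _)
  rw [sum_insert hi] at hins
  omega

namespace SimpleGraph

variable {V : Type*}

theorem ncard_neighborSet_eq_degree (G : SimpleGraph V) (v : V) [Fintype (G.neighborSet v)] :
    (G.neighborSet v).ncard = G.degree v := by
  rw [← card_neighborFinset_eq_degree, ← Set.ncard_coe_finset, coe_neighborFinset]

theorem ncard_neighborSet_sup {G H : SimpleGraph V} (hGH : Disjoint G H) (v : V)
    (hG : (G.neighborSet v).Finite := by toFinite_tac)
    (hH : (H.neighborSet v).Finite := by toFinite_tac) :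
    ((G ⊔ H).neighborSet v).ncard = (G.neighborSet v).ncard + (H.neighborSet v).ncard := by
  rw [neighborSet_sup, Set.ncard_union_eq (disjoint_neighborSet.mpr hGH v) hG hH]

theorem ncard_edgeSet_eq_card_edgeFinset (G : SimpleGraph V) [Fintype G.edgeSet] :
    G.edgeSet.ncard = #G.edgeFinset := by
  rw [← coe_edgeFinset, Set.ncard_coe_finset]

variable [Fintype V] [DecidableEq V] {G : SimpleGraph V} [DecidableRel G.Adj] {s : Finset V}

theorem neighborFinset_eq_erase_of_support_subset (hsupp : G.support ⊆ s) {v : V} (hv : v ∈ s)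
    (hdeg : #s - 1 ≤ G.degree v) : G.neighborFinset v = s.erase v := by
  refine eq_of_subset_of_card_le (fun w hw => ?_) ?_
  · have hvw : G.Adj v w := (mem_neighborFinset G v w).mp hw
    exact mem_erase.mpr ⟨hvw.ne.symm, hsupp (G.mem_support.mpr ⟨v, hvw.symm⟩)⟩
  · rwa [card_erase_of_mem hv, card_neighborFinset_eq_degree]

theorem adj_iff_of_support_subset (hsupp : G.support ⊆ s) (hdeg : ∀ v ∈ s, #s - 1 ≤ G.degree v)
    (v w : V) : G.Adj v w ↔ v ∈ s ∧ w ∈ s ∧ v ≠ w := by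
  constructor
  · intro hvw
    exact ⟨hsupp (G.mem_support.mpr ⟨w, hvw⟩), hsupp (G.mem_support.mpr ⟨v, hvw.symm⟩), hvw.ne⟩
  · rintro ⟨hv, hw, hvw⟩
    rw [← mem_neighborFinset, neighborFinset_eq_erase_of_support_subset hsupp hv (hdeg v hv)]
    exact mem_erase.mpr ⟨hvw.symm, hw⟩

end SimpleGraph

open SimpleGraph in
/-- If adding a set `A*` of at most `k(k-1)/2` new edges (a graph `A` edge-disjoint from
`G`) increases the degree of at least `k` distinct vertices by at least `k - 1` each,
then `|A*| = k(k-1)/2` and those `k` vertices together with the edges of `A*` form a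
complete graph on `k` vertices. -/
theorem added_edges_form_clique {V : Type*} [Fintype V] (G A : SimpleGraph V)
    (hdisj : Disjoint G A) (k : ℕ) (hA : A.edgeSet.ncard ≤ k * (k - 1) / 2)
    (s : Finset V) (hs : s.card = k)
    (hinc : ∀ v ∈ s,
      (G.neighborSet v).ncard + (k - 1) ≤ ((G ⊔ A).neighborSet v).ncard) :
    A.edgeSet.ncard = k * (k - 1) / 2 ∧
      ∀ v w : V, A.Adj v w ↔ (v ∈ s ∧ w ∈ s ∧ v ≠ w) := by
  classical
  have hdeg : ∀ v ∈ s, k - 1 ≤ A.degree v := fun v hv => by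
    have := hinc v hv
    rw [ncard_neighborSet_sup hdisj, ncard_neighborSet_eq_degree A] at this
    omega
  have hedges : 2 * #A.edgeFinset ≤ k * (k - 1) := by
    have := Nat.two_mul_div_two_of_even k.even_mul_pred_self
    rw [ncard_edgeSet_eq_card_edgeFinset] at hA
    omega
  have hsum_s : k * (k - 1) ≤ ∑ v ∈ s, A.degree v := by
    simpa [hs] using card_nsmul_le_sum s (fun v => A.degree v) (k - 1) hdeg
  have hsum_le : ∑ v ∈ s, A.degree v ≤ ∑ v, A.degree v := sum_le_sum_of_subset (subset_univ s)
  have hhandshake := A.sum_degrees_eq_twice_card_edges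
  have hsupp : A.support ⊆ s := fun v hv => by
    by_contra hvs
    refine ((A.degree_eq_zero_iff_notMem_support v).mp ?_) hv
    exact eq_zero_of_notMem_of_sum_le_card_mul hdeg (by rw [hs]; omega) hvs
  refine ⟨?_, adj_iff_of_support_subset hsupp (hs ▸ hdeg)⟩
  rw [ncard_edgeSet_eq_card_edgeFinset]
  omega
end
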